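/- arXiv:1310.6304 — 4 statements merged into one kernel-verified Lean document; each statement's English description precedes it below -/
import Mathlib

section
/- For a random hashing matrix with uniform independent h and ξ, the variance of ⟨Hᵀx, Hᵀx⟩ = ‖Hᵀx‖² satisfies Var(‖Hᵀx‖²) ≤ (2/d)·‖x‖₂⁴ for any fixed x ∈ ℝᵖ. -/
open Matrix

/-- The hashed image `Hᵀ x` of `x` for hash function `hf` and sign function `s`. -/
def hashMulVec (p d : ℕ) (hf : Fin p → Fin d) (s : Fin p → Bool) (x : Fin p → ℝ) :
    Fin d → ℝ :=
  fun j => ∑ i, (if hf i = j then (if s i then (1 : ℝ) else -1) else 0) * x i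

/-- The expectation over uniform independent `(h, ξ)` of a real-valued function. -/
noncomputable def hashExp (p d : ℕ) (f : (Fin p → Fin d) → (Fin p → Bool) → ℝ) : ℝ :=
  (∑ hf : Fin p → Fin d, ∑ s : Fin p → Bool, f hf s) /
    ((Fintype.card (Fin p → Fin d)) * (Fintype.card (Fin p → Bool)) : ℝ)

namespace Stmt7Aux
open Finset
variable {p d : ℕ}

def eps (s : Fin p → Bool) (i : Fin p) : ℝ := if s i then 1 else -1
def del (hf : Fin p → Fin d) (i k : Fin p) : ℝ := if hf i = hf k then 1 else 0

lemma eps_sq (s : Fin p → Bool) (i : Fin p) : eps s i * eps s i = 1 := by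
  unfold eps; split <;> norm_num
lemma del_self (hf : Fin p → Fin d) (i : Fin p) : del hf i i = 1 := by simp [del]
lemma del_mul_self (hf : Fin p → Fin d) (i k : Fin p) : del hf i k * del hf i k = del hf i k := by
  unfold del; split <;> norm_num
lemma del_comm (hf : Fin p → Fin d) (i k : Fin p) : del hf k i = del hf i k := by
  unfold del; simp [eq_comm]

lemma eps_flip (m n : Fin p) (s : Fin p → Bool) :
    eps (Function.update s m (!s m)) n = if n = m then -eps s n else eps s n := by
  unfold eps
  rcases eq_or_ne n m with rfl | h
  · simp only [Function.update_self, if_pos rfl]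
    cases s n <;> simp
  · simp [Function.update_of_ne h, h]

lemma flip_invol (m : Fin p) :
    Function.Involutive (fun s : Fin p → Bool => Function.update s m (!s m)) := by
  intro s
  funext j
  rcases eq_or_ne j m with rfl | h
  · simp
  · simp [Function.update_of_ne h]

lemma sum_flip_eq_zero (m : Fin p) (F : (Fin p → Bool) → ℝ)
    (h : ∀ s, F (Function.update s m (!s m)) = - F s) :
    ∑ s, F s = 0 := by
  have h1 : ∑ s, F s = ∑ s, F (Function.update s m (!s m)) :=
    (Equiv.sum_comp (flip_invol m).toPerm F).symm
  have h2 : ∑ s, F (Function.update s m (!s m)) = - ∑ s, F s := by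
    simp only [h, Finset.sum_neg_distrib]
  linarith [h1, h2]

lemma sum_eps_two (i k : Fin p) (h : i ≠ k) :
    ∑ s : Fin p → Bool, eps s i * eps s k = 0 := by
  apply sum_flip_eq_zero i
  intro s
  rw [eps_flip, eps_flip, if_pos rfl, if_neg (Ne.symm h)]
  ring

lemma sum_eps_four (a b c m : Fin p) (ha : a ≠ m) (hb : b ≠ m) (hc : c ≠ m) :
    ∑ s : Fin p → Bool, eps s a * eps s b * eps s c * eps s m = 0 := by
  apply sum_flip_eq_zero m
  intro s
  rw [eps_flip, eps_flip, eps_flip, eps_flip, if_neg ha, if_neg hb, if_neg hc, if_pos rfl]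
  ring

lemma sum_del_eq (hd : 0 < d) (i k : Fin p) (h : i ≠ k) :
    ∑ hf : Fin p → Fin d, del hf i k = (d : ℝ) ^ p / d := by
  have hp : 0 < p := i.pos
  have key : ∑ hf : Fin p → Fin d, del hf i k
      = ∑ q : Fin d × ({ j // j ≠ i } → Fin d), del ((Equiv.funSplitAt i (Fin d)).symm q) i k :=
    (Equiv.sum_comp (Equiv.funSplitAt i (Fin d)).symm _).symm
  rw [key, Fintype.sum_prod_type_right]
  have inner : ∀ g : { j // j ≠ i } → Fin d,
      ∑ a : Fin d, del ((Equiv.funSplitAt i (Fin d)).symm (a, g)) i k = 1 := by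
    intro g
    have h2 : ∀ a : Fin d, del ((Equiv.funSplitAt i (Fin d)).symm (a, g)) i k
        = if a = g ⟨k, Ne.symm h⟩ then 1 else 0 := by
      intro a
      unfold del
      simp [Equiv.funSplitAt, Equiv.piSplitAt, Ne.symm h]
    simp only [h2]
    simp
  simp only [inner]
  simp only [Finset.sum_const, Finset.card_univ, nsmul_eq_mul, mul_one]
  have hcard : Fintype.card ({ j // j ≠ i } → Fin d) = d ^ (p - 1) := by
    rw [Fintype.card_fun, Fintype.card_fin]
    congr 1
    rw [Fintype.card_subtype_compl, Fintype.card_fin, Fintype.card_subtype_eq]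
  rw [hcard]
  have hq : p - 1 + 1 = p := Nat.succ_pred_eq_of_pos hp
  have hd0 : (d : ℝ) ≠ 0 := Nat.cast_ne_zero.mpr hd.ne'
  push_cast
  field_simp
  rw [← pow_succ, hq]

noncomputable def Sfun (x : Fin p → ℝ) (hf : Fin p → Fin d) (s : Fin p → Bool) : ℝ :=
  ∑ i, ∑ k, eps s i * eps s k * del hf i k * (x i * x k)

noncomputable def Tfun (x : Fin p → ℝ) (hf : Fin p → Fin d) (s : Fin p → Bool) : ℝ :=
  ∑ ik ∈ (univ : Finset (Fin p)).offDiag,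
    eps s ik.1 * eps s ik.2 * del hf ik.1 ik.2 * (x ik.1 * x ik.2)

lemma sumSq_eq (x : Fin p → ℝ) (hf : Fin p → Fin d) (s : Fin p → Bool) :
    ∑ j, (hashMulVec p d hf s x j) ^ 2 = Sfun x hf s := by
  unfold hashMulVec Sfun
  simp only [sq, Finset.sum_mul_sum]
  rw [Finset.sum_comm]
  refine Finset.sum_congr rfl fun i _ => ?_
  rw [Finset.sum_comm]
  refine Finset.sum_congr rfl fun k _ => ?_
  have h3 : ∀ j : Fin d,
      (if hf i = j then (if s i then (1:ℝ) else -1) else 0) * x i *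
        ((if hf k = j then (if s k then (1:ℝ) else -1) else 0) * x k)
      = if hf i = j then ((if hf k = j then (1:ℝ) else 0) * (eps s i * eps s k * (x i * x k)))
          else 0 := by
    intro j
    unfold eps
    split_ifs <;> ring
  rw [Finset.sum_congr rfl fun j _ => h3 j]
  rw [Finset.sum_ite_eq (Finset.univ : Finset (Fin d)) (hf i)]
  simp only [Finset.mem_univ, if_true]
  have hdel : (if hf k = hf i then (1:ℝ) else 0) = del hf i k := by
    unfold del; simp [eq_comm]
  rw [hdel]; ring

lemma Sfun_eq (x : Fin p → ℝ) (hf : Fin p → Fin d) (s : Fin p → Bool) :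
    Sfun x hf s = (∑ i, x i ^ 2) + Tfun x hf s := by
  unfold Sfun Tfun
  rw [← Finset.sum_product']
  rw [← Finset.diag_union_offDiag (univ : Finset (Fin p)),
    Finset.sum_union (Finset.disjoint_diag_offDiag _), Finset.sum_diag]
  congr 1
  refine Finset.sum_congr rfl fun i _ => ?_
  rw [eps_sq, del_self]
  ring

lemma sum_swap_in {γ A B : Type*} [Fintype A] [Fintype B] (t : Finset γ) (F : A → B → γ → ℝ) :
    ∑ a : A, ∑ b : B, ∑ c ∈ t, F a b c = ∑ c ∈ t, ∑ a : A, ∑ b : B, F a b c := by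
  have h : ∀ a : A, ∑ b : B, ∑ c ∈ t, F a b c = ∑ c ∈ t, ∑ b : B, F a b c :=
    fun a => Finset.sum_comm
  simp_rw [h]
  exact Finset.sum_comm

lemma factor_sum (E : (Fin p → Bool) → ℝ) (D : (Fin p → Fin d) → ℝ) (X : ℝ) :
    ∑ hf : Fin p → Fin d, ∑ s : Fin p → Bool, (E s * D hf * X)
      = (∑ s, E s) * (∑ hf, D hf) * X := by
  have h1 : ∀ hf : Fin p → Fin d, ∑ s : Fin p → Bool, (E s * D hf * X)
      = (∑ s, E s) * (D hf * X) := by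
    intro hf
    rw [Finset.sum_mul]
    exact Finset.sum_congr rfl fun s _ => by ring
  simp_rw [h1]
  rw [← Finset.mul_sum, Finset.mul_sum]
  rw [show (∑ hf : Fin p → Fin d, (∑ s : Fin p → Bool, E s) * (D hf * X))
      = ∑ hf : Fin p → Fin d, (∑ s : Fin p → Bool, E s) * D hf * X from
    Finset.sum_congr rfl fun hf _ => by ring]
  rw [← Finset.sum_mul, ← Finset.mul_sum]

lemma sum_T_zero (x : Fin p → ℝ) :
    ∑ hf : Fin p → Fin d, ∑ s : Fin p → Bool, Tfun x hf s = 0 := by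
  unfold Tfun
  rw [sum_swap_in]
  refine Finset.sum_eq_zero fun ik hik => ?_
  obtain ⟨-, -, hne⟩ := Finset.mem_offDiag.mp hik
  rw [factor_sum (fun s => eps s ik.1 * eps s ik.2) (fun hf => del hf ik.1 ik.2)
    (x ik.1 * x ik.2), sum_eps_two ik.1 ik.2 hne]
  ring

lemma sum_Tsq (hd : 0 < d) (x : Fin p → ℝ) :
    ∑ hf : Fin p → Fin d, ∑ s : Fin p → Bool, (Tfun x hf s) ^ 2
      = 2 * (2:ℝ) ^ p * ((d:ℝ) ^ p / d) *
          ∑ ik ∈ (univ : Finset (Fin p)).offDiag, x ik.1 ^ 2 * x ik.2 ^ 2 := by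
  unfold Tfun
  simp only [sq, Finset.sum_mul_sum]
  rw [sum_swap_in]
  have main : ∀ ik ∈ (univ : Finset (Fin p)).offDiag,
      (∑ hf : Fin p → Fin d, ∑ s : Fin p → Bool,
        ∑ jl ∈ (univ : Finset (Fin p)).offDiag,
          eps s ik.1 * eps s ik.2 * del hf ik.1 ik.2 * (x ik.1 * x ik.2) *
            (eps s jl.1 * eps s jl.2 * del hf jl.1 jl.2 * (x jl.1 * x jl.2)))
      = 2 * (2:ℝ) ^ p * ((d:ℝ) ^ p / d) * (x ik.1 ^ 2 * x ik.2 ^ 2) := by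
    intro ik hik
    obtain ⟨-, -, hne⟩ := Finset.mem_offDiag.mp hik
    set i := ik.1 with hi
    set k := ik.2 with hk
    rw [sum_swap_in]
    have hzero : ∀ jl ∈ (univ : Finset (Fin p)).offDiag,
        jl ∉ ({(i, k), (k, i)} : Finset (Fin p × Fin p)) →
        (∑ hf : Fin p → Fin d, ∑ s : Fin p → Bool,
          eps s i * eps s k * del hf i k * (x i * x k) *
            (eps s jl.1 * eps s jl.2 * del hf jl.1 jl.2 * (x jl.1 * x jl.2))) = 0 := by
      intro jl hjl hnotin
      obtain ⟨-, -, hjlne⟩ := Finset.mem_offDiag.mp hjl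
      set j := jl.1 with hj
      set l := jl.2 with hl
      have hne1 : jl ≠ (i, k) := by intro h; exact hnotin (by simp [h])
      have hne2 : jl ≠ (k, i) := by intro h; exact hnotin (by simp [h])
      have h1 : ∀ (hf : Fin p → Fin d) (s : Fin p → Bool),
          eps s i * eps s k * del hf i k * (x i * x k) *
            (eps s j * eps s l * del hf j l * (x j * x l))
          = (eps s i * eps s k * eps s j * eps s l) * (del hf i k * del hf j l) *
              (x i * x k * (x j * x l)) := fun hf s => by ring
      simp_rw [h1]
      rw [factor_sum]
      have hepszero : (∑ s : Fin p → Bool, eps s i * eps s k * eps s j * eps s l) = 0 := by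
        by_cases hji : j = i
        · have hlk : l ≠ k := fun h => hne1 (by rw [show jl = (j, l) from rfl, hji, h])
          exact sum_eps_four i k j l (fun h => hjlne (hji.trans h)) (fun h => hlk h.symm) hjlne
        · by_cases hjk : j = k
          · have hli : l ≠ i := fun h => hne2 (by rw [show jl = (j, l) from rfl, hjk, h])
            exact sum_eps_four i k j l (fun h => hli h.symm) (fun h => hjlne (hjk.trans h))
              hjlne
          · have h2 : ∀ s : Fin p → Bool,
                eps s i * eps s k * eps s j * eps s l
                  = eps s i * eps s k * eps s l * eps s j := fun s => by ring
            simp_rw [h2]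
            exact sum_eps_four i k l j (fun h => hji h.symm) (fun h => hjk h.symm)
              (fun h => hjlne h.symm)
      rw [hepszero]
      ring
    rw [← Finset.sum_subset (by
        intro jl hjl
        simp only [Finset.mem_insert, Finset.mem_singleton] at hjl
        rcases hjl with rfl | rfl
        · exact Finset.mem_offDiag.mpr ⟨Finset.mem_univ _, Finset.mem_univ _, hne⟩
        · exact Finset.mem_offDiag.mpr ⟨Finset.mem_univ _, Finset.mem_univ _, hne.symm⟩)
      hzero]
    have hpairne : ((i, k) : Fin p × Fin p) ≠ (k, i) := by
      simp only [ne_eq, Prod.mk.injEq, not_and]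
      intro h _; exact hne h
    rw [Finset.sum_pair hpairne]
    have hsum : ∀ C : ℝ,
        (∑ hf : Fin p → Fin d, ∑ s : Fin p → Bool, del hf i k * C)
          = ((d:ℝ) ^ p / d) * ((2:ℝ) ^ p) * C := by
      intro C
      have h1 : ∀ hf : Fin p → Fin d,
          (∑ _s : Fin p → Bool, del hf i k * C) = (2:ℝ) ^ p * (del hf i k * C) := by
        intro hf
        rw [Finset.sum_const, Finset.card_univ, nsmul_eq_mul]
        norm_num [Fintype.card_fun]
      simp_rw [h1]
      rw [← Finset.mul_sum, ← Finset.sum_mul, sum_del_eq hd i k hne]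
      ring
    have e1 : ∀ (hf : Fin p → Fin d) (s : Fin p → Bool),
        eps s i * eps s k * del hf i k * (x i * x k) *
          (eps s i * eps s k * del hf i k * (x i * x k))
        = del hf i k * (x i ^ 2 * x k ^ 2) := by
      intro hf s
      calc eps s i * eps s k * del hf i k * (x i * x k) *
            (eps s i * eps s k * del hf i k * (x i * x k))
          = (eps s i * eps s i) * (eps s k * eps s k) * (del hf i k * del hf i k) *
              (x i ^ 2 * x k ^ 2) := by ring
        _ = del hf i k * (x i ^ 2 * x k ^ 2) := by
            rw [eps_sq, eps_sq, del_mul_self]; ring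
    have e2 : ∀ (hf : Fin p → Fin d) (s : Fin p → Bool),
        eps s i * eps s k * del hf i k * (x i * x k) *
          (eps s k * eps s i * del hf k i * (x k * x i))
        = del hf i k * (x i ^ 2 * x k ^ 2) := by
      intro hf s
      calc eps s i * eps s k * del hf i k * (x i * x k) *
            (eps s k * eps s i * del hf k i * (x k * x i))
          = (eps s i * eps s i) * (eps s k * eps s k) * (del hf i k * del hf k i) *
              (x i ^ 2 * x k ^ 2) := by ring
        _ = del hf i k * (x i ^ 2 * x k ^ 2) := by
            rw [eps_sq, eps_sq, del_comm, del_mul_self]; ring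
    simp_rw [e1, e2]
    rw [hsum]
    ring
  rw [Finset.sum_congr rfl main, ← Finset.mul_sum]
  congr 1
  exact Finset.sum_congr rfl fun ik _ => by ring

end Stmt7Aux

open Stmt7Aux Finset in
/-- The variance of `‖Hᵀ x‖²` over the random hashing matrix is at most
`(2/d) · ‖x‖₂⁴`. -/
theorem stmt_7 (p d : ℕ) (hd : 0 < d) (x : Fin p → ℝ) :
    hashExp p d (fun hf s => (∑ j, (hashMulVec p d hf s x j) ^ 2) ^ 2) -
        (hashExp p d (fun hf s => ∑ j, (hashMulVec p d hf s x j) ^ 2)) ^ 2 ≤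
      (2 / d) * (∑ i, (x i) ^ 2) ^ 2 := by
  have hdR : (0:ℝ) < (d:ℝ) := by exact_mod_cast hd
  set Q : ℝ := ∑ i, x i ^ 2 with hQ
  set W : ℝ := ∑ ik ∈ (univ : Finset (Fin p)).offDiag, x ik.1 ^ 2 * x ik.2 ^ 2 with hW
  -- card facts
  have hcard : ((Fintype.card (Fin p → Fin d)) * (Fintype.card (Fin p → Bool)) : ℝ)
      = (d:ℝ) ^ p * 2 ^ p := by
    rw [Fintype.card_fun, Fintype.card_fun, Fintype.card_fin, Fintype.card_fin,
      Fintype.card_bool]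
    push_cast
    ring
  have hNpos : (0:ℝ) < (d:ℝ) ^ p * 2 ^ p := by positivity
  -- numerator of the mean
  have hnum2 : (∑ hf : Fin p → Fin d, ∑ s : Fin p → Bool, ∑ j, (hashMulVec p d hf s x j) ^ 2)
      = (d:ℝ) ^ p * 2 ^ p * Q := by
    have h1 : ∀ (hf : Fin p → Fin d) (s : Fin p → Bool),
        (∑ j, (hashMulVec p d hf s x j) ^ 2) = Q + Tfun x hf s := by
      intro hf s; rw [sumSq_eq, Sfun_eq]
    simp_rw [h1]
    rw [show (∑ hf : Fin p → Fin d, ∑ s : Fin p → Bool, (Q + Tfun x hf s))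
        = (∑ hf : Fin p → Fin d, ∑ s : Fin p → Bool, Q)
          + ∑ hf : Fin p → Fin d, ∑ s : Fin p → Bool, Tfun x hf s by
      rw [← Finset.sum_add_distrib]
      exact Finset.sum_congr rfl fun hf _ => by rw [← Finset.sum_add_distrib]]
    rw [sum_T_zero, add_zero]
    rw [Finset.sum_const, Finset.sum_const, Finset.card_univ, Finset.card_univ]
    simp only [nsmul_eq_mul]
    rw [Fintype.card_fun, Fintype.card_fun, Fintype.card_fin, Fintype.card_fin,
      Fintype.card_bool]
    push_cast
    ring
  -- numerator of the second moment
  have hnum1 : (∑ hf : Fin p → Fin d, ∑ s : Fin p → Bool,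
      (∑ j, (hashMulVec p d hf s x j) ^ 2) ^ 2)
      = (d:ℝ) ^ p * 2 ^ p * Q ^ 2 + 2 * (2:ℝ) ^ p * ((d:ℝ) ^ p / d) * W := by
    have h1 : ∀ (hf : Fin p → Fin d) (s : Fin p → Bool),
        (∑ j, (hashMulVec p d hf s x j) ^ 2) ^ 2
          = Q ^ 2 + (2 * Q * Tfun x hf s + (Tfun x hf s) ^ 2) := by
      intro hf s; rw [sumSq_eq, Sfun_eq]; ring
    simp_rw [h1]
    rw [show (∑ hf : Fin p → Fin d, ∑ s : Fin p → Bool,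
        (Q ^ 2 + (2 * Q * Tfun x hf s + (Tfun x hf s) ^ 2)))
        = (∑ hf : Fin p → Fin d, ∑ s : Fin p → Bool, (Q^2:ℝ))
          + ((∑ hf : Fin p → Fin d, ∑ s : Fin p → Bool, 2 * Q * Tfun x hf s)
            + ∑ hf : Fin p → Fin d, ∑ s : Fin p → Bool, (Tfun x hf s) ^ 2) by
      rw [← Finset.sum_add_distrib, ← Finset.sum_add_distrib]
      refine Finset.sum_congr rfl fun hf _ => ?_
      rw [← Finset.sum_add_distrib, ← Finset.sum_add_distrib]]
    have hmid : (∑ hf : Fin p → Fin d, ∑ s : Fin p → Bool, 2 * Q * Tfun x hf s) = 0 := by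
      have : ∀ hf : Fin p → Fin d, (∑ s : Fin p → Bool, 2 * Q * Tfun x hf s)
          = 2 * Q * ∑ s : Fin p → Bool, Tfun x hf s := fun hf => (Finset.mul_sum _ _ _).symm
      simp_rw [this]
      rw [← Finset.mul_sum, sum_T_zero, mul_zero]
    rw [hmid, zero_add, sum_Tsq hd x, ← hW]
    rw [Finset.sum_const, Finset.sum_const, Finset.card_univ, Finset.card_univ]
    simp only [nsmul_eq_mul]
    rw [Fintype.card_fun, Fintype.card_fun, Fintype.card_fin, Fintype.card_fin,
      Fintype.card_bool]
    push_cast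
    ring
  have hWQ : W ≤ Q ^ 2 := by
    have hQ2 : Q ^ 2 = ∑ ik ∈ (univ : Finset (Fin p)) ×ˢ (univ : Finset (Fin p)),
        x ik.1 ^ 2 * x ik.2 ^ 2 := by
      rw [sq, Finset.sum_mul_sum, Finset.sum_product]
    rw [hQ2, hW]
    refine Finset.sum_le_sum_of_subset_of_nonneg ?_ (fun ik _ _ => by positivity)
    intro ik hik
    rw [← Finset.diag_union_offDiag (univ : Finset (Fin p))]
    exact Finset.mem_union_right _ hik
  unfold hashExp
  rw [hcard, hnum1, hnum2]
  have hstep : ((d:ℝ) ^ p * 2 ^ p * Q ^ 2 + 2 * (2:ℝ) ^ p * ((d:ℝ) ^ p / d) * W)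
        / ((d:ℝ) ^ p * 2 ^ p) - ((d:ℝ) ^ p * 2 ^ p * Q / ((d:ℝ) ^ p * 2 ^ p)) ^ 2
      = (2 / d) * W := by
    field_simp
    ring
  rw [hstep]
  have h2d : (0:ℝ) ≤ 2 / (d:ℝ) := by positivity
  calc (2 / (d:ℝ)) * W ≤ (2 / d) * Q ^ 2 := by
        exact mul_le_mul_of_nonneg_left hWQ h2d
    _ = (2 / d) * Q ^ 2 := rfl
end

section
/- The rank-k truncation of the SVD gives the best rank-k approximation in Frobenius norm: if X = UΣVᵀ with singular values σ₁ ≥ σ₂ ≥ …, then for any matrix B of rank at most k, ‖X − B‖_F² ≥ Σ_{i>k} σᵢ², with equality attained by X̃ = U_k Σ_k V_kᵀ (Eckart–Young). -/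
/-
Conjugating by the orthogonal matrices `U` and `V` preserves the sum of squared entries, so
`X` may be replaced by the rectangular diagonal `Σ` and `B` by `C = Uᵀ B V`, of the same rank.
The kernel of `C` carries an orthonormal family `w₁, …, w_r` with `r ≥ p - k`. Bessel's
inequality, applied to each row of `Σ - C`, gives
  `‖Σ - C‖_F² ≥ ∑ⱼ ‖(Σ - C) wⱼ‖² = ∑ⱼ ‖Σ wⱼ‖² = ∑ₗ σₗ² tₗ`,  where `tₗ = ∑ⱼ wⱼ(l)²`.
The weights `tₗ` lie in `[0, 1]` and add up to `r ≥ p - k`, so for the nonincreasing `σₗ²`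
the weighted sum is at least the sum of the `p - k` smallest values, `∑_{l ≥ k} σₗ²`. The
truncation attains this bound, since `Σ - Σₖ` is diagonal with entries `σₗ` for `l ≥ k`.
-/

open Matrix Finset

theorem sum_le_sum_mul_of_card_le {ι : Type*} [DecidableEq ι] {S B : Finset ι} {s t : ι → ℝ}
    (c : ℝ) (hBS : B ⊆ S) (hc : 0 ≤ c) (hlarge : ∀ i ∈ S \ B, c ≤ s i)
    (hsmall : ∀ i ∈ B, s i ≤ c) (ht0 : ∀ i ∈ S \ B, 0 ≤ t i) (ht1 : ∀ i ∈ B, t i ≤ 1)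
    (hcard : (#B : ℝ) ≤ ∑ i ∈ S, t i) :
    ∑ i ∈ B, s i ≤ ∑ i ∈ S, s i * t i := by
  have hsplit (f : ι → ℝ) : ∑ i ∈ S, f i = ∑ i ∈ S \ B, f i + ∑ i ∈ B, f i :=
    (sum_sdiff hBS).symm
  have hB : ∑ i ∈ B, s i * (1 - t i) ≤ ∑ i ∈ B, c * (1 - t i) :=
    sum_le_sum fun i hi => mul_le_mul_of_nonneg_right (hsmall i hi) (by linarith [ht1 i hi])
  have hA : ∑ i ∈ S \ B, c * t i ≤ ∑ i ∈ S \ B, s i * t i :=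
    sum_le_sum fun i hi => mul_le_mul_of_nonneg_right (hlarge i hi) (ht0 i hi)
  have hcount : c * ∑ i ∈ B, (1 - t i) ≤ c * ∑ i ∈ S \ B, t i := by
    refine mul_le_mul_of_nonneg_left ?_ hc
    rw [sum_sub_distrib, sum_const, nsmul_one]
    linarith [hsplit t]
  simp only [mul_sub, mul_one, sum_sub_distrib, ← mul_sum, sum_const, nsmul_eq_mul]
    at hA hB hcount
  rw [hsplit fun i => s i * t i]
  linarith

theorem Fin.card_filter_le_val (p k : ℕ) : #{j : Fin p | k ≤ j.val} = p - k := by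
  have h := card_filter_add_card_filter_not (s := univ) fun j : Fin p => (j : ℕ) < k
  simp only [not_lt, Fin.card_filter_val_lt, card_univ, Fintype.card_fin] at h
  omega

theorem sum_Ico_min_eq_sum_filter {M : Type*} [AddCommMonoid M] (n p k : ℕ) (f : ℕ → M) :
    ∑ i ∈ Ico k (min n p), f i = ∑ j : Fin p with k ≤ j.val, if j.val < n then f j else 0 := by
  rw [sum_filter,
    Fin.sum_univ_eq_sum_range (fun i => if k ≤ i then if i < n then f i else 0 else 0),
    ← sum_filter, ← sum_filter]
  congr 1
  ext i
  simp only [mem_Ico, mem_filter, mem_range]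
  omega

section Orthonormal

variable {ι q : Type*} [Fintype ι] [Fintype q] {w : ι → EuclideanSpace ℝ q}

theorem Orthonormal.sum_sq_apply_le_one (hw : Orthonormal ℝ w) (l : q) :
    ∑ j, w j l ^ 2 ≤ 1 := by
  classical
  simpa [EuclideanSpace.inner_single_right] using
    hw.sum_inner_products_le (s := univ) (EuclideanSpace.single l (1 : ℝ))

theorem Orthonormal.sum_sum_sq_apply (hw : Orthonormal ℝ w) :
    ∑ l, ∑ j, w j l ^ 2 = Fintype.card ι := by
  rw [sum_comm]
  simp [← EuclideanSpace.real_norm_sq_eq, hw.1]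

theorem Orthonormal.sum_sum_sq_mulVec_le {m : Type*} [Fintype m] (hw : Orthonormal ℝ w)
    (A : Matrix m q ℝ) :
    ∑ j, ∑ i, (A *ᵥ w j) i ^ 2 ≤ ∑ i, ∑ l, A i l ^ 2 := by
  rw [sum_comm]
  refine sum_le_sum fun i _ => ?_
  have := hw.sum_inner_products_le (s := univ) (WithLp.toLp 2 (A i))
  simpa [EuclideanSpace.real_norm_sq_eq, EuclideanSpace.inner_eq_star_dotProduct, mulVec,
    dotProduct_comm] using this

end Orthonormal

namespace Matrix

section SumSq

variable {m n R : Type*} [Fintype m] [Fintype n] [CommSemiring R]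

theorem sum_sq_transpose (M : Matrix m n R) :
    ∑ i, ∑ j, Mᵀ i j ^ 2 = ∑ i, ∑ j, M i j ^ 2 :=
  Finset.sum_comm

theorem sum_sq_eq_trace_transpose_mul_self (M : Matrix m n R) :
    ∑ i, ∑ j, M i j ^ 2 = trace (Mᵀ * M) := by
  simp only [trace, Matrix.diag, mul_apply, transpose_apply, sq]
  exact Finset.sum_comm

theorem sum_sq_orthogonal_mul [DecidableEq m] {U : Matrix m m R} (hU : Uᵀ * U = 1)
    (M : Matrix m n R) : ∑ i, ∑ j, (U * M) i j ^ 2 = ∑ i, ∑ j, M i j ^ 2 := by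
  rw [sum_sq_eq_trace_transpose_mul_self, sum_sq_eq_trace_transpose_mul_self, transpose_mul,
    Matrix.mul_assoc, ← Matrix.mul_assoc Uᵀ, hU, Matrix.one_mul]

theorem sum_sq_mul_orthogonal_transpose [DecidableEq n] {V : Matrix n n R} (hV : Vᵀ * V = 1)
    (M : Matrix m n R) : ∑ i, ∑ j, (M * Vᵀ) i j ^ 2 = ∑ i, ∑ j, M i j ^ 2 := by
  rw [← sum_sq_transpose, transpose_mul, transpose_transpose, sum_sq_orthogonal_mul hV,
    sum_sq_transpose]

end SumSq

theorem rank_mul_mul_le {l m n o R : Type*} [Fintype m] [Fintype n] [Fintype o] [CommSemiring R]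
    [StrongRankCondition R] (A : Matrix l m R) (B : Matrix m n R) (C : Matrix n o R) :
    (A * B * C).rank ≤ B.rank :=
  (rank_mul_le_left _ _).trans (rank_mul_le_right _ _)

theorem exists_orthonormal_mulVec_eq_zero {m q : Type*} [Fintype m] [Fintype q]
    [DecidableEq q] (C : Matrix m q ℝ) :
    ∃ (r : ℕ) (w : Fin r → EuclideanSpace ℝ q), Orthonormal ℝ w ∧ (∀ j, C *ᵥ w j = 0) ∧
      Fintype.card q ≤ C.rank + r := by
  let f := toLpLin 2 2 C
  let b := stdOrthonormalBasis ℝ (LinearMap.ker f)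
  refine ⟨_, fun j => b j, b.orthonormal.comp_linearIsometry (LinearMap.ker f).subtypeₗᵢ,
    fun j => congrArg WithLp.ofLp (b j).2, ?_⟩
  have hrank : C.rank = Module.finrank ℝ (LinearMap.range f) := by
    rw [C.rank_eq_finrank_range_toLin (PiLp.basisFun 2 ℝ m) (PiLp.basisFun 2 ℝ q)]
    rfl
  have := f.finrank_range_add_finrank_ker
  simp only [finrank_euclideanSpace] at this
  omega

theorem sum_sq_mulVec_of_transpose_mul_self_eq_diagonal {m q : Type*} [Fintype m]
    [Fintype q] [DecidableEq q] {D : Matrix m q ℝ} {c : q → ℝ} (hD : Dᵀ * D = diagonal c)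
    (x : q → ℝ) : ∑ i, (D *ᵥ x) i ^ 2 = ∑ l, c l * x l ^ 2 := by
  calc ∑ i, (D *ᵥ x) i ^ 2 = x ⬝ᵥ ((Dᵀ * D) *ᵥ x) := by
        rw [← mulVec_mulVec, dotProduct_mulVec, vecMul_transpose]
        simp only [dotProduct, sq]
    _ = ∑ l, c l * x l ^ 2 := by
        simp only [hD, dotProduct, mulVec_diagonal]
        exact sum_congr rfl fun l _ => by ring

theorem sum_filter_le_sum_sq_sub_of_rank_le {m : Type*} [Fintype m] {p k : ℕ}
    {D : Matrix m (Fin p) ℝ} {c : ℕ → ℝ} (hc : Antitone c) (hc0 : ∀ i, 0 ≤ c i)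
    (hD : Dᵀ * D = diagonal fun j : Fin p => c j) {C : Matrix m (Fin p) ℝ} (hC : C.rank ≤ k) :
    ∑ j : Fin p with k ≤ j.val, c j ≤ ∑ i, ∑ j, (D - C) i j ^ 2 := by
  obtain ⟨r, w, hw, hCw, hdim⟩ := C.exists_orthonormal_mulVec_eq_zero
  have hcard : (#{j : Fin p | k ≤ j.val} : ℝ) ≤ ∑ l, ∑ j, w j l ^ 2 := by
    rw [hw.sum_sum_sq_apply, Fintype.card_fin, Fin.card_filter_le_val]
    rw [Fintype.card_fin] at hdim
    exact_mod_cast (by omega : p - k ≤ r)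
  calc ∑ j : Fin p with k ≤ j.val, c j ≤ ∑ l : Fin p, c l * ∑ j, w j l ^ 2 := by
        refine sum_le_sum_mul_of_card_le (c k) (subset_univ _) (hc0 k) (fun l hl => ?_)
          (fun l hl => ?_) (fun l _ => sum_nonneg fun j _ => sq_nonneg _)
          (fun l _ => hw.sum_sq_apply_le_one l) hcard
        · simp only [mem_sdiff, mem_univ, mem_filter, true_and, not_le] at hl
          exact hc hl.le
        · simp only [mem_filter, mem_univ, true_and] at hl
          exact hc hl
    _ = ∑ j, ∑ i, (D *ᵥ w j) i ^ 2 := by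
        simp only [sum_sq_mulVec_of_transpose_mul_self_eq_diagonal hD, mul_sum]
        exact sum_comm
    _ = ∑ j, ∑ i, ((D - C) *ᵥ w j) i ^ 2 := by simp [sub_mulVec, hCw]
    _ ≤ ∑ i, ∑ j, (D - C) i j ^ 2 := hw.sum_sum_sq_mulVec_le _

section RectDiagonal

variable {R : Type*}

def rectDiagonal [Zero R] (n p : ℕ) (d : ℕ → R) : Matrix (Fin n) (Fin p) R :=
  of fun i j => if (i : ℕ) = j then d i else 0

theorem transpose_rectDiagonal [Zero R] (n p : ℕ) (d : ℕ → R) :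
    (rectDiagonal n p d)ᵀ = rectDiagonal p n d := by
  ext i j
  simp only [rectDiagonal, transpose_apply, of_apply, eq_comm (a := (j : ℕ))]
  split_ifs with h <;> simp [h]

theorem rectDiagonal_self [Zero R] (p : ℕ) (d : ℕ → R) :
    rectDiagonal p p d = diagonal fun j : Fin p => d j := by
  ext i j
  simp [rectDiagonal, diagonal_apply, Fin.val_inj]

theorem rectDiagonal_sub [AddGroup R] (n p : ℕ) (d e : ℕ → R) :
    rectDiagonal n p d - rectDiagonal n p e = rectDiagonal n p (d - e) := by
  ext i j
  simp only [rectDiagonal, Matrix.sub_apply, of_apply, Pi.sub_apply]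
  split_ifs <;> simp

theorem rectDiagonal_mul_rectDiagonal [Semiring R] (n m p : ℕ) (d e : ℕ → R) :
    rectDiagonal n m d * rectDiagonal m p e =
      rectDiagonal n p fun i => if i < m then d i * e i else 0 := by
  ext i j
  simp only [rectDiagonal, mul_apply, of_apply]
  by_cases him : (i : ℕ) < m
  · rw [sum_eq_single ⟨i, him⟩ (fun l _ hl => ?_) (by simp)]
    · simp [him]
    · have : (i : ℕ) ≠ l := fun h => hl (Fin.ext h.symm)
      simp [this]
  · refine (sum_eq_zero fun l _ => ?_).trans (by simp [him])
    have : (i : ℕ) ≠ l := fun h => him (h ▸ l.isLt)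
    simp [this]

theorem transpose_mul_self_rectDiagonal [CommSemiring R] (n p : ℕ) (d : ℕ → R) :
    (rectDiagonal n p d)ᵀ * rectDiagonal n p d =
      diagonal fun j : Fin p => if (j : ℕ) < n then d j ^ 2 else 0 := by
  rw [transpose_rectDiagonal, rectDiagonal_mul_rectDiagonal, rectDiagonal_self]
  simp only [sq]

theorem rank_rectDiagonal_le [CommSemiring R] [StrongRankCondition R] {n p k : ℕ} {d : ℕ → R}
    (hd : ∀ i, k ≤ i → d i = 0) : (rectDiagonal n p d).rank ≤ k := by
  have hfac : rectDiagonal n p d = rectDiagonal n k d * rectDiagonal k p (1 : ℕ → R) := by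
    rw [rectDiagonal_mul_rectDiagonal]
    congr 1
    ext i
    split_ifs with hi
    · simp
    · exact hd i (not_lt.mp hi)
  calc (rectDiagonal n p d).rank ≤ (rectDiagonal n k d).rank := hfac ▸ rank_mul_le_left _ _
    _ ≤ k := (rank_le_card_width _).trans_eq (Fintype.card_fin k)

theorem sum_sq_rectDiagonal [CommSemiring R] (n p : ℕ) (d : ℕ → R) :
    ∑ i, ∑ j, rectDiagonal n p d i j ^ 2 =
      ∑ j : Fin p, if (j : ℕ) < n then d j ^ 2 else 0 := by
  rw [sum_sq_eq_trace_transpose_mul_self, transpose_mul_self_rectDiagonal, trace_diagonal]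

end RectDiagonal

end Matrix

/-- Eckart–Young: if `X = U Σ Vᵀ` is a singular value decomposition with
nonincreasing nonnegative singular values `σ`, then every matrix `B` of rank at
most `k` satisfies `‖X − B‖_F² ≥ ∑_{i ≥ k} σ i²`, and equality is attained by the
rank-`k` truncation `X̃ = U Σₖ Vᵀ`. -/
theorem stmt_8 (n p k : ℕ) (X : Matrix (Fin n) (Fin p) ℝ)
    (U : Matrix (Fin n) (Fin n) ℝ) (V : Matrix (Fin p) (Fin p) ℝ)
    (Sig : Matrix (Fin n) (Fin p) ℝ) (σ : ℕ → ℝ)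
    (hU : Uᵀ * U = 1) (hV : Vᵀ * V = 1)
    (hSig : ∀ i j, Sig i j = if (i : ℕ) = (j : ℕ) then σ (i : ℕ) else 0)
    (hσ : ∀ i j, i ≤ j → σ j ≤ σ i) (hσ0 : ∀ i, 0 ≤ σ i)
    (hX : X = U * Sig * Vᵀ) :
    (∀ B : Matrix (Fin n) (Fin p) ℝ, B.rank ≤ k →
        ∑ i ∈ Finset.Ico k (min n p), (σ i) ^ 2 ≤ ∑ i, ∑ j, ((X - B) i j) ^ 2) ∧
      (∃ Xk : Matrix (Fin n) (Fin p) ℝ,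
        Xk = U * (Matrix.of fun (i : Fin n) (j : Fin p) =>
          if (i : ℕ) = (j : ℕ) ∧ (i : ℕ) < k then σ (i : ℕ) else 0) * Vᵀ ∧
        Xk.rank ≤ k ∧
        ∑ i, ∑ j, ((X - Xk) i j) ^ 2 = ∑ i ∈ Finset.Ico k (min n p), (σ i) ^ 2) := by
  have hSig' : Sig = rectDiagonal n p σ := ext hSig
  have hσsq : Antitone fun i => if i < n then σ i ^ 2 else 0 := fun i j hij => by
    dsimp only
    split_ifs with hj hi
    · exact pow_le_pow_left₀ (hσ0 j) (hσ i j hij) 2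
    · omega
    · positivity
    · rfl
  have hXk : (of fun (i : Fin n) (j : Fin p) => if (i : ℕ) = j ∧ (i : ℕ) < k then σ i else 0) =
      rectDiagonal n p fun i => if i < k then σ i else 0 := by
    ext i j
    simp only [rectDiagonal, of_apply, ite_and]
  refine ⟨fun B hB => ?_, _, rfl, ?_, ?_⟩
  · have hconj : X - B = U * (Sig - Uᵀ * B * V) * Vᵀ := by
      rw [Matrix.mul_sub, Matrix.sub_mul, ← hX, Matrix.mul_assoc, Matrix.mul_assoc,
        mul_eq_one_comm.mp hV, Matrix.mul_one, ← Matrix.mul_assoc, mul_eq_one_comm.mp hU,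
        Matrix.one_mul]
    rw [hconj, sum_sq_mul_orthogonal_transpose hV, sum_sq_orthogonal_mul hU,
      sum_Ico_min_eq_sum_filter]
    refine sum_filter_le_sum_sq_sub_of_rank_le hσsq (fun i => by positivity)
      (hSig' ▸ transpose_mul_self_rectDiagonal n p σ) ?_
    exact (rank_mul_mul_le _ _ _).trans hB
  · rw [hXk]
    exact (rank_mul_mul_le _ _ _).trans (rank_rectDiagonal_le fun i hi => if_neg (not_lt.mpr hi))
  · rw [hXk, hX, ← Matrix.sub_mul, ← Matrix.mul_sub, sum_sq_mul_orthogonal_transpose hV,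
      sum_sq_orthogonal_mul hU, hSig', rectDiagonal_sub, sum_sq_rectDiagonal,
      sum_Ico_min_eq_sum_filter, sum_filter]
    refine sum_congr rfl fun j _ => ?_
    simp only [Pi.sub_apply]
    split_ifs <;> first | omega | simp
end

section
/- For a random hashing matrix H and fixed unit vectors x, y ∈ ℝᵖ, the expectation of (⟨Hᵀx, Hᵀy⟩ − ⟨x, y⟩)² is at most 2/d. -/
open Matrix

namespace StmtAux

open Finset

private def sgn : Bool → ℝ := fun b => if b then 1 else -1

lemma sgn_sq (b : Bool) : sgn b * sgn b = 1 := by cases b <;> simp [sgn]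

lemma signSum4 (p : ℕ) (i k i' k' : Fin p) (hik : i ≠ k) (hik' : i' ≠ k') :
    ∑ s : Fin p → Bool, sgn (s i) * sgn (s k) * (sgn (s i') * sgn (s k')) =
      if (i' = i ∧ k' = k) ∨ (i' = k ∧ k' = i) then (2:ℝ)^p else 0 := by
  have key : ∀ s : Fin p → Bool,
      sgn (s i) * sgn (s k) * (sgn (s i') * sgn (s k')) =
      ∏ m, ((if m = i then sgn (s m) else 1) * (if m = k then sgn (s m) else 1) *
            ((if m = i' then sgn (s m) else 1) * (if m = k' then sgn (s m) else 1))) := by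
    intro s
    simp only [Finset.prod_mul_distrib, Finset.prod_ite_eq', mem_univ, if_true]
  simp_rw [key]
  rw [← Fintype.piFinset_univ,
    ← Finset.prod_univ_sum (fun _ => (univ : Finset Bool))
      (fun m b => ((if m = i then sgn b else 1) * if m = k then sgn b else 1) *
          ((if m = i' then sgn b else 1) * if m = k' then sgn b else 1))]
  have hfac : ∀ m : Fin p, (∑ b : Bool, ((if m = i then sgn b else 1) * (if m = k then sgn b else 1) *
            ((if m = i' then sgn b else 1) * (if m = k' then sgn b else 1)))) =
      1 + ((if m = i then (-1:ℝ) else 1) * (if m = k then (-1:ℝ) else 1) *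
            ((if m = i' then (-1:ℝ) else 1) * (if m = k' then (-1:ℝ) else 1))) := by
    intro m
    rw [Fintype.sum_bool]
    simp [sgn]
  simp_rw [hfac]
  split_ifs with hcond
  · have : ∀ m : Fin p, (1 + ((if m = i then (-1:ℝ) else 1) * (if m = k then (-1:ℝ) else 1) *
            ((if m = i' then (-1:ℝ) else 1) * (if m = k' then (-1:ℝ) else 1)))) = 2 := by
      intro m
      rcases hcond with ⟨h1, h2⟩ | ⟨h1, h2⟩ <;> subst h1 <;> subst h2 <;>
        split_ifs <;> norm_num
    simp_rw [this]
    simp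
  · push_neg at hcond
    obtain ⟨h1, h2⟩ := hcond
    -- find witness m with factor 0
    have hwit : ∃ m : Fin p, (1 + ((if m = i then (-1:ℝ) else 1) * (if m = k then (-1:ℝ) else 1) *
            ((if m = i' then (-1:ℝ) else 1) * (if m = k' then (-1:ℝ) else 1)))) = 0 := by
      by_cases hii : i' = i
      · refine ⟨k', ?_⟩
        have hk'k : k' ≠ k := fun h => h1 hii h
        have hk'i : k' ≠ i := hii ▸ (Ne.symm hik')
        rw [if_neg hk'i, if_neg hk'k, if_neg (Ne.symm hik'), if_pos rfl]
        norm_num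
      · by_cases hik2 : i' = k
        · refine ⟨k', ?_⟩
          have hk'i : k' ≠ i := fun h => h2 hik2 h
          have hk'k : k' ≠ k := fun h => hik' ((h.trans hik2.symm).symm)
          rw [if_neg hk'i, if_neg hk'k, if_neg (Ne.symm hik'), if_pos rfl]
          norm_num
        · refine ⟨i', ?_⟩
          rw [if_neg hii, if_neg hik2, if_pos rfl, if_neg hik']
          norm_num
    obtain ⟨m, hm⟩ := hwit
    exact Finset.prod_eq_zero (mem_univ m) hm

lemma hashSum (p d : ℕ) (i k : Fin p) (hik : i ≠ k) :
    (∑ hf : Fin p → Fin d, (if hf i = hf k then (1:ℝ) else 0)) * d = (d:ℝ)^p := by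
  have step1 : ∀ hf : Fin p → Fin d, (if hf i = hf k then (1:ℝ) else 0) =
      ∑ j : Fin d, (if hf i = j then (1:ℝ) else 0) * (if hf k = j then 1 else 0) := by
    intro hf
    rw [Finset.sum_eq_single (hf i)]
    · by_cases h : hf i = hf k <;> simp [h, eq_comm]
    · intro b _ hb; simp [Ne.symm hb]
    · simp
  simp_rw [step1]
  rw [Finset.sum_comm]
  have step2 : ∀ j : Fin d, (∑ hf : Fin p → Fin d,
      (if hf i = j then (1:ℝ) else 0) * (if hf k = j then 1 else 0)) =
      ∏ m : Fin p, (if m = i ∨ m = k then (1:ℝ) else d) := by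
    intro j
    have expand : ∀ hf : Fin p → Fin d,
        (if hf i = j then (1:ℝ) else 0) * (if hf k = j then 1 else 0) =
        ∏ m : Fin p, ((if m = i then (if hf m = j then (1:ℝ) else 0) else 1) *
          (if m = k then (if hf m = j then (1:ℝ) else 0) else 1)) := by
      intro hf
      simp only [Finset.prod_mul_distrib, Finset.prod_ite_eq', mem_univ, if_true]
    simp_rw [expand]
    rw [← Fintype.piFinset_univ,
      ← Finset.prod_univ_sum (fun _ => (univ : Finset (Fin d)))
        (fun m v => (if m = i then (if v = j then (1:ℝ) else 0) else 1) *
          (if m = k then (if v = j then (1:ℝ) else 0) else 1))]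
    refine Finset.prod_congr rfl fun m _ => ?_
    by_cases hmi : m = i
    · subst hmi
      rw [if_pos (Or.inl rfl)]
      simp [if_neg hik, Finset.sum_ite_eq]
    · by_cases hmk : m = k
      · subst hmk
        rw [if_pos (Or.inr rfl)]
        simp [if_neg (Ne.symm hik), hmi, Finset.sum_ite_eq]
      · rw [if_neg (by tauto)]
        simp [hmi, hmk]
  simp_rw [step2]
  rw [Finset.sum_const, card_univ, Fintype.card_fin, nsmul_eq_mul]
  have key : (d:ℝ)^p = (∏ m : Fin p, (if m = i ∨ m = k then (1:ℝ) else d)) * (d * d) := by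
    have h1 : (d:ℝ)^p = ∏ m : Fin p, ((if m = i ∨ m = k then (1:ℝ) else d) *
        (if m = i ∨ m = k then (d:ℝ) else 1)) := by
      have : ∀ m : Fin p, ((if m = i ∨ m = k then (1:ℝ) else d) *
          (if m = i ∨ m = k then (d:ℝ) else 1)) = (d:ℝ) := by
        intro m; split_ifs <;> ring
      simp [this]
    have h2 : (∏ m : Fin p, (if m = i ∨ m = k then (d:ℝ) else 1)) = d * d := by
      have : ∀ m : Fin p, (if m = i ∨ m = k then (d:ℝ) else 1) =
          ((if m = i then (d:ℝ) else 1) * (if m = k then (d:ℝ) else 1)) := by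
        intro m
        by_cases hmi : m = i
        · subst hmi; simp [hik]
        · by_cases hmk : m = k
          · subst hmk; simp [hmi, Ne.symm hik]
          · simp [hmi, hmk]
      simp_rw [this]
      rw [Finset.prod_mul_distrib]
      simp [Finset.prod_ite_eq', mem_univ]
    rw [h1, Finset.prod_mul_distrib, h2]
  rw [key]; ring

lemma dot_expand (p d : ℕ) (hf : Fin p → Fin d) (s : Fin p → Bool) (x y : Fin p → ℝ) :
    hashMulVec p d hf s x ⬝ᵥ hashMulVec p d hf s y - x ⬝ᵥ y =
    ∑ a ∈ Finset.univ.offDiag, sgn (s a.1) * sgn (s a.2) *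
      (if hf a.1 = hf a.2 then (1:ℝ) else 0) * (x a.1 * y a.2) := by
  have sgn_sq : ∀ b : Bool, sgn b * sgn b = 1 := by intro b; cases b <;> simp [sgn]
  have main : hashMulVec p d hf s x ⬝ᵥ hashMulVec p d hf s y =
      ∑ a ∈ (univ : Finset (Fin p)) ×ˢ (univ : Finset (Fin p)),
        sgn (s a.1) * sgn (s a.2) * (if hf a.1 = hf a.2 then (1:ℝ) else 0) *
          (x a.1 * y a.2) := by
    simp only [dotProduct, hashMulVec]
    rw [Finset.sum_product]
    simp_rw [Finset.sum_mul_sum]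
    rw [Finset.sum_comm]
    refine Finset.sum_congr rfl fun i _ => ?_
    rw [Finset.sum_comm]
    refine Finset.sum_congr rfl fun k _ => ?_
    rw [Finset.sum_eq_single (hf i)]
    · by_cases h : hf i = hf k
      · rw [if_pos rfl, if_pos h.symm, if_pos h]
        cases hsi : s i <;> cases hsk : s k <;> simp [sgn, hsi, hsk] <;> ring
      · rw [if_pos rfl, if_neg (fun hh : hf k = hf i => h hh.symm), if_neg h]
        ring
    · intro b _ hb
      rw [if_neg (Ne.symm hb)]
      ring
    · simp
  rw [main, ← Finset.diag_union_offDiag,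
    Finset.sum_union (Finset.disjoint_diag_offDiag _), Finset.sum_diag]
  have hdiag : (∑ i : Fin p, (sgn (s (i, i).1) * sgn (s (i, i).2) *
      if hf (i, i).1 = hf (i, i).2 then (1:ℝ) else 0) * (x (i, i).1 * y (i, i).2)) =
      ∑ i, x i * y i := by
    refine Finset.sum_congr rfl fun i _ => ?_
    show (sgn (s i) * sgn (s i) * if hf i = hf i then (1:ℝ) else 0) * (x i * y i) = x i * y i
    rw [if_pos rfl, sgn_sq]
    ring
  rw [hdiag]
  simp only [dotProduct]
  ring

lemma sCollapse (p d : ℕ) (x y : Fin p → ℝ) (hf : Fin p → Fin d) :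
    ∑ s : Fin p → Bool, (∑ a ∈ Finset.univ.offDiag, sgn (s a.1) * sgn (s a.2) *
      (if hf a.1 = hf a.2 then (1:ℝ) else 0) * (x a.1 * y a.2)) ^ 2 =
    (2:ℝ)^p * ∑ a ∈ Finset.univ.offDiag, (if hf a.1 = hf a.2 then (1:ℝ) else 0) *
      ((x a.1 * y a.2) * (x a.1 * y a.2 + x a.2 * y a.1)) := by
  have hZ2 : ∀ s : Fin p → Bool,
      (∑ a ∈ Finset.univ.offDiag, sgn (s a.1) * sgn (s a.2) *
        (if hf a.1 = hf a.2 then (1:ℝ) else 0) * (x a.1 * y a.2)) ^ 2 =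
      ∑ a ∈ Finset.univ.offDiag, ∑ b ∈ Finset.univ.offDiag,
        (sgn (s a.1) * sgn (s a.2) * (sgn (s b.1) * sgn (s b.2))) *
        (((if hf a.1 = hf a.2 then (1:ℝ) else 0) * (if hf b.1 = hf b.2 then (1:ℝ) else 0)) *
          ((x a.1 * y a.2) * (x b.1 * y b.2))) := by
    intro s
    rw [sq, Finset.sum_mul_sum]
    exact Finset.sum_congr rfl fun a _ => Finset.sum_congr rfl fun b _ => by ring
  simp_rw [hZ2]
  rw [Finset.sum_comm]
  rw [Finset.mul_sum]
  refine Finset.sum_congr rfl fun a ha => ?_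
  rw [Finset.sum_comm]
  have ha' := (Finset.mem_offDiag.mp ha).2.2
  have hstep : ∀ b : Fin p × Fin p, b ∈ Finset.univ.offDiag →
      (∑ s : Fin p → Bool, (sgn (s a.1) * sgn (s a.2) * (sgn (s b.1) * sgn (s b.2))) *
        (((if hf a.1 = hf a.2 then (1:ℝ) else 0) * (if hf b.1 = hf b.2 then (1:ℝ) else 0)) *
          ((x a.1 * y a.2) * (x b.1 * y b.2)))) =
      (if b = a ∨ b = (a.2, a.1) then (2:ℝ)^p else 0) *
        (((if hf a.1 = hf a.2 then (1:ℝ) else 0) * (if hf b.1 = hf b.2 then (1:ℝ) else 0)) *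
          ((x a.1 * y a.2) * (x b.1 * y b.2))) := by
    intro b hb
    rw [← Finset.sum_mul, signSum4 p a.1 a.2 b.1 b.2 ha' (Finset.mem_offDiag.mp hb).2.2]
    congr 1
    congr 1
    rw [Prod.ext_iff, Prod.ext_iff]
  rw [Finset.sum_congr rfl hstep]
  simp_rw [ite_mul, zero_mul]
  rw [← Finset.sum_filter]
  have hfilt : (Finset.univ.offDiag).filter (fun b => b = a ∨ b = (a.2, a.1)) =
      {a, (a.2, a.1)} := by
    ext b
    simp only [Finset.mem_filter, Finset.mem_insert, Finset.mem_singleton]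
    constructor
    · exact fun h => h.2
    · rintro (rfl | rfl)
      · exact ⟨ha, Or.inl rfl⟩
      · refine ⟨Finset.mem_offDiag.mpr ⟨Finset.mem_univ _, Finset.mem_univ _, Ne.symm ha'⟩,
          Or.inr rfl⟩
  rw [hfilt, Finset.sum_pair (by
    intro h
    exact ha' (congrArg Prod.fst h))]
  by_cases h : hf a.1 = hf a.2
  · simp only [if_pos h, if_pos h.symm]
    ring
  · simp only [if_neg h, if_neg (fun hh : hf a.2 = hf a.1 => h hh.symm)]
    ring

lemma Tbound (p : ℕ) (x y : Fin p → ℝ)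
    (hx : ∑ i, (x i) ^ 2 = 1) (hy : ∑ i, (y i) ^ 2 = 1) :
    (∑ a ∈ (Finset.univ : Finset (Fin p)).offDiag,
      (x a.1 * y a.2) * (x a.1 * y a.2 + x a.2 * y a.1)) ≤ 2 := by
  have hsplit : (∑ a ∈ (Finset.univ : Finset (Fin p)).offDiag,
      (x a.1 * y a.2) * (x a.1 * y a.2 + x a.2 * y a.1)) =
      (∑ a ∈ (Finset.univ : Finset (Fin p)).offDiag, (x a.1 * y a.2)^2) +
      (∑ a ∈ (Finset.univ : Finset (Fin p)).offDiag, (x a.1 * y a.1) * (x a.2 * y a.2)) := by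
    rw [← Finset.sum_add_distrib]
    exact Finset.sum_congr rfl fun a _ => by ring
  rw [hsplit]
  have hsub : (Finset.univ : Finset (Fin p)).offDiag ⊆ Finset.univ ×ˢ Finset.univ := by
    rw [← Finset.diag_union_offDiag]
    exact Finset.subset_union_right
  have h1 : (∑ a ∈ (Finset.univ : Finset (Fin p)).offDiag, (x a.1 * y a.2)^2) ≤ 1 := by
    calc (∑ a ∈ (Finset.univ : Finset (Fin p)).offDiag, (x a.1 * y a.2)^2)
        ≤ ∑ a ∈ Finset.univ ×ˢ Finset.univ, (x a.1 * y a.2)^2 :=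
          Finset.sum_le_sum_of_subset_of_nonneg hsub (fun a _ _ => sq_nonneg _)
      _ = 1 := by
          rw [Finset.sum_product]
          simp_rw [mul_pow, ← Finset.mul_sum, ← Finset.sum_mul, hx, hy]
          norm_num
  have h2 : (∑ a ∈ (Finset.univ : Finset (Fin p)).offDiag, (x a.1 * y a.1) * (x a.2 * y a.2)) ≤ 1 := by
    have hfull : (∑ a ∈ Finset.univ ×ˢ Finset.univ, (x a.1 * y a.1) * (x a.2 * y a.2)) =
        (∑ i, x i * y i)^2 := by
      rw [Finset.sum_product, sq, Finset.sum_mul_sum]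
    have hsplit2 : (∑ a ∈ Finset.univ ×ˢ Finset.univ, (x a.1 * y a.1) * (x a.2 * y a.2)) =
        (∑ i, (x i * y i)^2) +
        (∑ a ∈ (Finset.univ : Finset (Fin p)).offDiag, (x a.1 * y a.1) * (x a.2 * y a.2)) := by
      rw [← Finset.diag_union_offDiag,
        Finset.sum_union (Finset.disjoint_diag_offDiag _), Finset.sum_diag]
      congr 1
      exact Finset.sum_congr rfl fun i _ => by ring
    have hcs : (∑ i, x i * y i)^2 ≤ 1 := by
      calc (∑ i, x i * y i)^2 ≤ (∑ i, (x i)^2) * (∑ i, (y i)^2) :=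
            Finset.sum_mul_sq_le_sq_mul_sq _ _ _
        _ = 1 := by rw [hx, hy]; norm_num
    have hnn : 0 ≤ ∑ i, (x i * y i)^2 := Finset.sum_nonneg fun i _ => sq_nonneg _
    rw [hfull] at hsplit2
    linarith
  linarith

end StmtAux

open StmtAux Finset in
/-- For fixed unit vectors `x, y`, the expected squared deviation of the hashed
inner product from the true inner product is at most `2 / d`. -/
theorem stmt_11 (p d : ℕ) (hd : 0 < d) (x y : Fin p → ℝ)
    (hx : ∑ i, (x i) ^ 2 = 1) (hy : ∑ i, (y i) ^ 2 = 1) :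
    hashExp p d
        (fun hf s => (hashMulVec p d hf s x ⬝ᵥ hashMulVec p d hf s y - x ⬝ᵥ y) ^ 2) ≤
      2 / d := by
  classical
  have hT2 : (∑ a ∈ (Finset.univ : Finset (Fin p)).offDiag,
      (x a.1 * y a.2) * (x a.1 * y a.2 + x a.2 * y a.1)) ≤ 2 := Tbound p x y hx hy
  set T : ℝ := ∑ a ∈ (Finset.univ : Finset (Fin p)).offDiag,
    (x a.1 * y a.2) * (x a.1 * y a.2 + x a.2 * y a.1) with hTdef
  have htotal : (∑ hf : Fin p → Fin d, ∑ s : Fin p → Bool,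
      (hashMulVec p d hf s x ⬝ᵥ hashMulVec p d hf s y - x ⬝ᵥ y) ^ 2) * d
      = (2:ℝ)^p * ((d:ℝ)^p * T) := by
    have h1 : ∀ (hf : Fin p → Fin d) (s : Fin p → Bool),
        (hashMulVec p d hf s x ⬝ᵥ hashMulVec p d hf s y - x ⬝ᵥ y) ^ 2 =
        (∑ a ∈ Finset.univ.offDiag, sgn (s a.1) * sgn (s a.2) *
          (if hf a.1 = hf a.2 then (1:ℝ) else 0) * (x a.1 * y a.2)) ^ 2 :=
      fun hf s => by rw [dot_expand]
    simp_rw [h1, sCollapse p d x y]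
    rw [← Finset.mul_sum, Finset.sum_comm, mul_assoc]
    congr 1
    have step : ∀ a : Fin p × Fin p, a ∈ (Finset.univ : Finset (Fin p)).offDiag →
        (∑ hf : Fin p → Fin d, (if hf a.1 = hf a.2 then (1:ℝ) else 0) *
          ((x a.1 * y a.2) * (x a.1 * y a.2 + x a.2 * y a.1))) =
        (∑ hf : Fin p → Fin d, (if hf a.1 = hf a.2 then (1:ℝ) else 0)) *
          ((x a.1 * y a.2) * (x a.1 * y a.2 + x a.2 * y a.1)) := by
      intro a _
      rw [Finset.sum_mul]
    rw [Finset.sum_congr rfl step, Finset.sum_mul]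
    have step2 : ∀ a : Fin p × Fin p, a ∈ (Finset.univ : Finset (Fin p)).offDiag →
        (∑ hf : Fin p → Fin d, (if hf a.1 = hf a.2 then (1:ℝ) else 0)) *
          ((x a.1 * y a.2) * (x a.1 * y a.2 + x a.2 * y a.1)) * d =
        (d:ℝ)^p * ((x a.1 * y a.2) * (x a.1 * y a.2 + x a.2 * y a.1)) := by
      intro a ha
      rw [mul_right_comm, hashSum p d a.1 a.2 (Finset.mem_offDiag.mp ha).2.2]
    rw [Finset.sum_congr rfl step2, ← Finset.mul_sum]
  have hd0 : (0:ℝ) < d := by exact_mod_cast hd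
  have hcard : ((Fintype.card (Fin p → Fin d)) * (Fintype.card (Fin p → Bool)) : ℝ) =
      (d:ℝ)^p * 2^p := by
    simp only [Fintype.card_fun, Fintype.card_fin, Fintype.card_bool]
    push_cast
    ring
  have hdp0 : (0:ℝ) < (d:ℝ)^p * 2^p := by positivity
  show (∑ hf : Fin p → Fin d, ∑ s : Fin p → Bool,
      (hashMulVec p d hf s x ⬝ᵥ hashMulVec p d hf s y - x ⬝ᵥ y) ^ 2) /
    ((Fintype.card (Fin p → Fin d)) * (Fintype.card (Fin p → Bool)) : ℝ) ≤ 2 / d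
  rw [hcard, div_le_div_iff₀ hdp0 hd0, htotal]
  have h2p : (0:ℝ) ≤ 2^p * (d:ℝ)^p := by positivity
  calc (2:ℝ)^p * ((d:ℝ)^p * T) = (2^p * (d:ℝ)^p) * T := by ring
    _ ≤ (2^p * (d:ℝ)^p) * 2 := mul_le_mul_of_nonneg_left hT2 h2p
    _ = 2 * ((d:ℝ)^p * 2^p) := by ring
end

section
/- Sin-theta bound via eigenvector residual (special case of Wedin/Davis–Kahan): let A and à be symmetric n × n matrices with spectral decompositions, U₁ the matrix of eigenvectors of A for its top k eigenvalues and Ũ₁ that of à for its top k eigenvalues. If min of the top-k eigenvalues of à ≥ α + γ and max of the remaining eigenvalues of A ≤ α, then ‖sin Φ(R(U₁), R(Ũ₁))‖_F ≤ ‖Ã − A‖_F / γ. -/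
open Matrix

/-- Frobenius norm squared as a trace. -/
lemma frob_eq {ι κ : Type*} [Fintype ι] [Fintype κ] (M : Matrix ι κ ℝ) :
    Matrix.trace (M * Mᵀ) = ∑ i, ∑ j, M i j ^ 2 := by
  simp [Matrix.trace, Matrix.mul_apply, Matrix.diag, sq]

lemma frob_nonneg {ι κ : Type*} [Fintype ι] [Fintype κ] (M : Matrix ι κ ℝ) :
    0 ≤ Matrix.trace (M * Mᵀ) := by
  rw [frob_eq]
  positivity

/-- Davis–Kahan / Wedin sin-theta bound: if the top-`k` eigenvalues of `Ã` are
at least `α + γ` and the bottom eigenvalues of `A` are at most `α`, then the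
Frobenius norm of the sines of the canonical angles between the two top-`k`
eigenspaces (given by `‖sin Φ‖_F² = k − ‖Ũ₁ᵀ U₁‖_F²`) is at most
`‖Ã − A‖_F / γ`. -/
theorem stmt_17 (n k m : ℕ) (hkm : k + m = n)
    (A At : Matrix (Fin n) (Fin n) ℝ) (hA : Aᵀ = A) (hAt : Atᵀ = At)
    (U₁ Ut₁ : Matrix (Fin n) (Fin k) ℝ) (U₂ : Matrix (Fin n) (Fin m) ℝ)
    (hU₁ : U₁ᵀ * U₁ = 1) (hUt₁ : Ut₁ᵀ * Ut₁ = 1) (hU₂ : U₂ᵀ * U₂ = 1)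
    (hcomplete : U₁ * U₁ᵀ + U₂ * U₂ᵀ = 1)
    (Λ₁ : Fin k → ℝ) (hAU₁ : A * U₁ = U₁ * Matrix.diagonal Λ₁)
    (Λ₂ : Fin m → ℝ) (hAU₂ : A * U₂ = U₂ * Matrix.diagonal Λ₂)
    (Λt : Fin k → ℝ) (hAtUt : At * Ut₁ = Ut₁ * Matrix.diagonal Λt)
    (α γ : ℝ) (hα : 0 < α) (hγ : 0 < γ)
    (hgap₁ : ∀ i, α + γ ≤ Λt i) (hgap₂ : ∀ i, Λ₂ i ≤ α) :
    Real.sqrt ((k : ℝ) - ∑ i, ∑ j, ((Ut₁ᵀ * U₁) i j) ^ 2) ≤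
      Real.sqrt (∑ i, ∑ j, ((At - A) i j) ^ 2) / γ := by
  set E : Matrix (Fin n) (Fin n) ℝ := At - A with hE
  set R : Matrix (Fin n) (Fin k) ℝ := E * Ut₁ with hRdef
  set S : Matrix (Fin m) (Fin k) ℝ := U₂ᵀ * Ut₁ with hSdef
  -- Step 1 : k - ‖Ut₁ᵀ U₁‖² = ‖S‖²
  have hsum1 : (Ut₁ᵀ * U₁) * (Ut₁ᵀ * U₁)ᵀ + Sᵀ * S = (1 : Matrix (Fin k) (Fin k) ℝ) := by
    have : (Ut₁ᵀ * U₁) * (Ut₁ᵀ * U₁)ᵀ + Sᵀ * S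
        = Ut₁ᵀ * (U₁ * U₁ᵀ + U₂ * U₂ᵀ) * Ut₁ := by
      simp only [hSdef, Matrix.transpose_mul, Matrix.transpose_transpose,
        Matrix.mul_add, Matrix.add_mul, Matrix.mul_assoc]
    rw [this, hcomplete, Matrix.mul_one, hUt₁]
  have h1 : (k : ℝ) - ∑ i, ∑ j, ((Ut₁ᵀ * U₁) i j) ^ 2 = ∑ i, ∑ j, S i j ^ 2 := by
    have := congrArg Matrix.trace hsum1
    rw [Matrix.trace_add, Matrix.trace_one, frob_eq, Matrix.trace_mul_comm, frob_eq] at this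
    simp only [Finset.card_univ, Fintype.card_fin] at this
    linarith
  -- Step 2 : residual identity
  have hU₂A : U₂ᵀ * A = Matrix.diagonal Λ₂ * U₂ᵀ := by
    have h := congrArg Matrix.transpose hAU₂
    simpa [Matrix.transpose_mul, hA, Matrix.diagonal_transpose] using h
  have hstep2 : U₂ᵀ * R = S * Matrix.diagonal Λt - Matrix.diagonal Λ₂ * S := by
    have e1 : U₂ᵀ * R = U₂ᵀ * (At * Ut₁) - (U₂ᵀ * A) * Ut₁ := by
      rw [hRdef, hE, Matrix.sub_mul, Matrix.mul_sub, Matrix.mul_assoc]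
    rw [e1, hAtUt, hU₂A, ← Matrix.mul_assoc, Matrix.mul_assoc (Matrix.diagonal Λ₂)]
  have hentry : ∀ i j, (U₂ᵀ * R) i j = S i j * (Λt j - Λ₂ i) := by
    intro i j
    rw [hstep2]
    simp [Matrix.sub_apply, Matrix.mul_diagonal, Matrix.diagonal_mul]
    ring
  -- Step 3 : γ² ‖S‖² ≤ ‖U₂ᵀ R‖²
  have h3 : γ ^ 2 * ∑ i, ∑ j, S i j ^ 2 ≤ ∑ i, ∑ j, ((U₂ᵀ * R) i j) ^ 2 := by
    rw [Finset.mul_sum]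
    refine Finset.sum_le_sum fun i _ => ?_
    rw [Finset.mul_sum]
    refine Finset.sum_le_sum fun j _ => ?_
    rw [hentry i j, mul_pow]
    have hd : γ ≤ Λt j - Λ₂ i := by linarith [hgap₁ j, hgap₂ i]
    have hd2 : γ ^ 2 ≤ (Λt j - Λ₂ i) ^ 2 := by nlinarith
    nlinarith [sq_nonneg (S i j)]
  -- Step 4 : ‖U₂ᵀ R‖² ≤ ‖R‖²
  have h4 : Matrix.trace ((U₂ᵀ * R) * (U₂ᵀ * R)ᵀ) ≤ Matrix.trace (R * Rᵀ) := by
    have e1 : Rᵀ * R = (U₁ᵀ * R)ᵀ * (U₁ᵀ * R) + (U₂ᵀ * R)ᵀ * (U₂ᵀ * R) := by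
      have : (U₁ᵀ * R)ᵀ * (U₁ᵀ * R) + (U₂ᵀ * R)ᵀ * (U₂ᵀ * R)
          = Rᵀ * (U₁ * U₁ᵀ + U₂ * U₂ᵀ) * R := by
        simp only [Matrix.transpose_mul, Matrix.transpose_transpose,
          Matrix.mul_add, Matrix.add_mul, Matrix.mul_assoc]
      rw [this, hcomplete, Matrix.mul_one]
    have e2 : Matrix.trace (R * Rᵀ)
        = Matrix.trace ((U₁ᵀ * R) * (U₁ᵀ * R)ᵀ) + Matrix.trace ((U₂ᵀ * R) * (U₂ᵀ * R)ᵀ) := by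
      rw [Matrix.trace_mul_comm, e1, Matrix.trace_add,
        Matrix.trace_mul_comm ((U₁ᵀ * R)ᵀ), Matrix.trace_mul_comm ((U₂ᵀ * R)ᵀ)]
    linarith [frob_nonneg (U₁ᵀ * R), e2.ge, e2.le]
  -- Step 5 : ‖R‖² ≤ ‖E‖²
  have h5 : Matrix.trace (R * Rᵀ) ≤ Matrix.trace (E * Eᵀ) := by
    set P : Matrix (Fin n) (Fin n) ℝ := Ut₁ * Ut₁ᵀ with hP
    set Q : Matrix (Fin n) (Fin n) ℝ := 1 - P with hQ
    have hPP : P * P = P := by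
      rw [hP, Matrix.mul_assoc, ← Matrix.mul_assoc Ut₁ᵀ, hUt₁, Matrix.one_mul]
    have hPt : Pᵀ = P := by rw [hP, Matrix.transpose_mul, Matrix.transpose_transpose]
    have hQQ : Q * Q = Q := by
      rw [hQ, Matrix.sub_mul, Matrix.one_mul, Matrix.mul_sub, Matrix.mul_one, hPP]
      abel
    have hQt : Qᵀ = Q := by rw [hQ, Matrix.transpose_sub, Matrix.transpose_one, hPt]
    have eRR : R * Rᵀ = E * P * Eᵀ := by
      rw [hRdef, Matrix.transpose_mul, hP]
      simp only [Matrix.mul_assoc]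
    have eEQ : (E * Q) * (E * Q)ᵀ = E * Eᵀ - E * P * Eᵀ := by
      rw [Matrix.transpose_mul, hQt, ← Matrix.mul_assoc, Matrix.mul_assoc E Q Q, hQQ, hQ,
        Matrix.mul_sub, Matrix.sub_mul, Matrix.mul_one]
    have := frob_nonneg (E * Q)
    rw [eEQ, Matrix.trace_sub] at this
    rw [eRR]
    linarith
  -- Assemble
  rw [h1]
  have hEtrace : Matrix.trace (E * Eᵀ) = ∑ i, ∑ j, E i j ^ 2 := frob_eq E
  have hU₂Rtrace : Matrix.trace ((U₂ᵀ * R) * (U₂ᵀ * R)ᵀ) = ∑ i, ∑ j, ((U₂ᵀ * R) i j) ^ 2 :=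
    frob_eq _
  have hmain : γ ^ 2 * ∑ i, ∑ j, S i j ^ 2 ≤ ∑ i, ∑ j, E i j ^ 2 := by
    rw [← hEtrace]
    calc γ ^ 2 * ∑ i, ∑ j, S i j ^ 2 ≤ ∑ i, ∑ j, ((U₂ᵀ * R) i j) ^ 2 := h3
    _ = Matrix.trace ((U₂ᵀ * R) * (U₂ᵀ * R)ᵀ) := hU₂Rtrace.symm
    _ ≤ Matrix.trace (R * Rᵀ) := h4
    _ ≤ Matrix.trace (E * Eᵀ) := h5
  rw [le_div_iff₀ hγ]
  have : Real.sqrt (γ ^ 2 * ∑ i, ∑ j, S i j ^ 2) ≤ Real.sqrt (∑ i, ∑ j, E i j ^ 2) :=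
    Real.sqrt_le_sqrt hmain
  rw [Real.sqrt_mul (sq_nonneg γ), Real.sqrt_sq hγ.le] at this
  calc Real.sqrt (∑ i, ∑ j, S i j ^ 2) * γ
      = γ * Real.sqrt (∑ i, ∑ j, S i j ^ 2) := by ring
    _ ≤ Real.sqrt (∑ i, ∑ j, E i j ^ 2) := this
end
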